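/- Let n be the number of validators and let V₁ and V₂ be any two views. Suppose the checkpoint (χ, c) is justified in V₁ and the checkpoint (χ', c) is justified in V₂, where χ ≠ χ' and the two checkpoints have the same slot c. Then there exists a set W of validators with 3·|W| ≥ n such that every validator in W violates condition E₁ in the combined message set V₁ ∪ V₂. -/
import Mathlib


/-- A checkpoint: a chain (a list of blocks) together with a slot. -/
structure Checkpoint (β : Type) where
  chain : List β
  c : ℕ
deriving DecidableEq

/-- A fin-vote: a validator together with a source and a target checkpoint. -/
abbrev FinVote (β : Type) (n : ℕ) := Fin n × Checkpoint β × Checkpoint β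

/-- A fin-vote from `S` to `T` is valid if `S.chain` is a prefix of `T.chain`
and `S.c < T.c`. -/
def ValidVote {β : Type} (S T : Checkpoint β) : Prop :=
  S.chain <+: T.chain ∧ S.c < T.c

/-- There is a supermajority link `S → T` in view `V`: the vote is valid and at least
`2n/3` validators (formally: `3·card ≥ 2n`) cast the fin-vote `(·, S, T)` in `V`. -/
def SMLink {β : Type} [DecidableEq β] {n : ℕ} (V : Finset (FinVote β n))
    (S T : Checkpoint β) : Prop :=
  ValidVote S T ∧
    2 * n ≤ 3 * (Finset.univ.filter (fun v : Fin n => (v, S, T) ∈ V)).card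

/-- A checkpoint is justified in view `V` (with genesis block `g`) if it is the genesis
checkpoint `(⟨[g], 0⟩)` or is reachable from it by a chain of supermajority links. -/
inductive Justified {β : Type} [DecidableEq β] (g : β) {n : ℕ}
    (V : Finset (FinVote β n)) : Checkpoint β → Prop
  | genesis : Justified g V ⟨[g], 0⟩
  | step (S C : Checkpoint β) : Justified g V S → SMLink V S C → Justified g V C

/-- A checkpoint `C` is finalized in view `V`: it is the genesis checkpoint, or it is
justified and there is a supermajority link `C → T` with `T.c = C.c + 1`. -/
def FinalizedCp {β : Type} [DecidableEq β] (g : β) {n : ℕ}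
    (V : Finset (FinVote β n)) (C : Checkpoint β) : Prop :=
  C = ⟨[g], 0⟩ ∨ (Justified g V C ∧ ∃ T : Checkpoint β, T.c = C.c + 1 ∧ SMLink V C T)

/-- A chain is finalized in view `V` if it is a prefix of the chain of some finalized
checkpoint. -/
def FinalizedChain {β : Type} [DecidableEq β] (g : β) {n : ℕ}
    (V : Finset (FinVote β n)) (χ : List β) : Prop :=
  ∃ C : Checkpoint β, FinalizedCp g V C ∧ χ <+: C.chain

/-- Validator `v` violates condition `E₁` (double voting) in the message set `M`:
`M` contains two distinct fin-votes by `v` whose targets have the same slot. -/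
def ViolatesE1 {β : Type} {n : ℕ} (M : Finset (FinVote β n)) (v : Fin n) : Prop :=
  ∃ S₁ T₁ S₂ T₂ : Checkpoint β, (v, S₁, T₁) ∈ M ∧ (v, S₂, T₂) ∈ M ∧
    (S₁, T₁) ≠ (S₂, T₂) ∧ T₁.c = T₂.c

/-- Validator `v` violates condition `E₂` (surround voting) in the message set `M`:
`M` contains fin-votes `(v, C₁, C₂)` and `(v, C₃, C₄)` with `C₃.c < C₁.c < C₂.c < C₄.c`. -/
def ViolatesE2 {β : Type} {n : ℕ} (M : Finset (FinVote β n)) (v : Fin n) : Prop :=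
  ∃ C₁ C₂ C₃ C₄ : Checkpoint β, (v, C₁, C₂) ∈ M ∧ (v, C₃, C₄) ∈ M ∧
    C₃.c < C₁.c ∧ C₁.c < C₂.c ∧ C₂.c < C₄.c

/-- **Uniqueness of justification per slot.** If checkpoints `(χ, c)` and `(χ', c)` with
`χ ≠ χ'` are justified in views `V₁` and `V₂` respectively, then at least `n/3`
validators violated `E₁` (double voting) in `V₁ ∪ V₂`. -/
theorem justification_unique_per_slot {β : Type} [DecidableEq β] (g : β) (n : ℕ)
    (V₁ V₂ : Finset (FinVote β n)) (χ χ' : List β) (c : ℕ) (hne : χ ≠ χ')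
    (h₁ : Justified g V₁ ⟨χ, c⟩) (h₂ : Justified g V₂ ⟨χ', c⟩) :
    ∃ W : Finset (Fin n), n ≤ 3 * W.card ∧ ∀ v ∈ W, ViolatesE1 (V₁ ∪ V₂) v := by
  cases h₁ with
  | genesis =>
    cases h₂ with
    | genesis => exact absurd rfl hne
    | step S C hS hlink => exact absurd hlink.1.2 (Nat.not_lt_zero _)
  | step S₁ C₁ hS₁ hlink₁ =>
    cases h₂ with
    | genesis => exact absurd hlink₁.1.2 (Nat.not_lt_zero _)
    | step S₂ C₂ hS₂ hlink₂ =>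
      obtain ⟨-, h1⟩ := hlink₁
      obtain ⟨-, h2⟩ := hlink₂
      refine ⟨(Finset.univ.filter (fun v : Fin n => (v, S₁, (⟨χ, c⟩ : Checkpoint β)) ∈ V₁)) ∩
        (Finset.univ.filter (fun v : Fin n => (v, S₂, (⟨χ', c⟩ : Checkpoint β)) ∈ V₂)), ?_, ?_⟩
      · have hu := Finset.card_le_univ
          ((Finset.univ.filter (fun v : Fin n => (v, S₁, (⟨χ, c⟩ : Checkpoint β)) ∈ V₁)) ∪
           (Finset.univ.filter (fun v : Fin n => (v, S₂, (⟨χ', c⟩ : Checkpoint β)) ∈ V₂)))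
        rw [Fintype.card_fin] at hu
        have hc := Finset.card_inter_add_card_union
          (Finset.univ.filter (fun v : Fin n => (v, S₁, (⟨χ, c⟩ : Checkpoint β)) ∈ V₁))
          (Finset.univ.filter (fun v : Fin n => (v, S₂, (⟨χ', c⟩ : Checkpoint β)) ∈ V₂))
        omega
      · intro v hv
        rw [Finset.mem_inter] at hv
        have hvA := Finset.mem_filter.mp hv.1
        have hvB := Finset.mem_filter.mp hv.2
        refine ⟨S₁, ⟨χ, c⟩, S₂, ⟨χ', c⟩, Finset.mem_union_left _ hvA.2,
          Finset.mem_union_right _ hvB.2, ?_, rfl⟩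
        intro h
        exact hne (congrArg (fun p => (Prod.snd p).chain) h)
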